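/- arXiv:0801.2524 — 8 statements merged into one kernel-verified Lean document; each statement's English description precedes it below -/
import Mathlib

section
/- The number of permutations of size K+1 (K ≥ 2) that have exactly one descent, do not start with the value 1, and do not end with the value K+1, is 2^{K−1}. -/
def descents (l : List ℕ) : ℕ :=
  (l.zip l.tail).countP (fun p => decide (p.2 < p.1))
def permToList {n : ℕ} (σ : Equiv.Perm (Fin n)) : List ℕ :=
  List.ofFn (fun i => (σ i : ℕ) + 1)

/-!
A permutation has at most one descent exactly when its one-line notation is some set of values
`A` in increasing order followed by `Aᶜ` in increasing order (a Grassmannian permutation). Its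
first letter is then `min A` and its last letter `max Aᶜ`, so it avoids starting with `1` and
ending with `K + 1` exactly when the value `K + 1` lies in `A` and `1` does not (as values in
`Fin (K + 1)`: `Fin.last K ∈ A` and `0 ∉ A`); such a permutation is not the identity, hence has
exactly one descent. Since `A` contains the largest value, it is determined by the permutation, so
these permutations are counted by the subsets of the `K - 1` middle values.
-/

theorem descents_cons_cons (a b : ℕ) (l : List ℕ) :
    descents (a :: b :: l) = (if b < a then 1 else 0) + descents (b :: l) := by
  simp only [descents, List.tail_cons, List.zip_cons_cons, List.countP_cons, decide_eq_true_eq]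
  omega

theorem descents_eq_zero_iff : ∀ {l : List ℕ}, descents l = 0 ↔ l.SortedLE
  | [] => by simp [descents, List.sortedLE_iff_pairwise]
  | [a] => by simp [descents, List.sortedLE_iff_pairwise]
  | a :: b :: l => by
    rw [descents_cons_cons, List.sortedLE_iff_isChain, List.isChain_cons_cons,
      ← List.sortedLE_iff_isChain, ← descents_eq_zero_iff]
    split <;> omega

theorem descents_append_le : ∀ (l₁ l₂ : List ℕ),
    descents (l₁ ++ l₂) ≤ descents l₁ + descents l₂ + 1
  | [], _ => by simp [descents]
  | [_], [] => by simp [descents]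
  | [a], b :: l => by
    rw [List.singleton_append, descents_cons_cons]
    have : descents [a] = 0 := rfl
    split <;> omega
  | a :: b :: l₁, l₂ => by
    rw [List.cons_append, List.cons_append, descents_cons_cons, descents_cons_cons,
      ← List.cons_append]
    have := descents_append_le (b :: l₁) l₂
    omega

theorem exists_sortedLE_append_of_descents_le_one : ∀ {l : List ℕ}, descents l ≤ 1 →
    ∃ l₁ l₂, l = l₁ ++ l₂ ∧ l₁.SortedLE ∧ l₂.SortedLE
  | [], _ => ⟨[], [], rfl, List.Pairwise.nil.sortedLE, List.Pairwise.nil.sortedLE⟩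
  | [a], _ => ⟨[a], [], rfl, (List.pairwise_singleton _ a).sortedLE, List.Pairwise.nil.sortedLE⟩
  | a :: b :: l, h => by
    rw [descents_cons_cons] at h
    by_cases hba : b < a
    · refine ⟨[a], b :: l, rfl, (List.pairwise_singleton _ a).sortedLE, ?_⟩
      rw [← descents_eq_zero_iff]
      simp only [hba, if_true] at h
      omega
    · simp only [hba, if_false, zero_add] at h
      obtain ⟨l₁, l₂, hl, h₁, h₂⟩ := exists_sortedLE_append_of_descents_le_one h
      refine ⟨a :: l₁, l₂, by rw [hl, List.cons_append], ?_, h₂⟩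
      rw [List.sortedLE_iff_isChain, List.isChain_cons, ← List.sortedLE_iff_isChain]
      refine ⟨fun c hc => ?_, h₁⟩
      have : (b :: l).head? = some c := by
        rw [hl, List.head?_append, Option.mem_def.1 hc]
        rfl
      simp only [List.head?_cons, Option.some.injEq] at this
      omega

theorem descents_le_one_iff {l : List ℕ} :
    descents l ≤ 1 ↔ ∃ l₁ l₂, l = l₁ ++ l₂ ∧ l₁.SortedLE ∧ l₂.SortedLE := by
  refine ⟨exists_sortedLE_append_of_descents_le_one, ?_⟩
  rintro ⟨l₁, l₂, rfl, h₁, h₂⟩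
  have := descents_append_le l₁ l₂
  rw [descents_eq_zero_iff.2 h₁, descents_eq_zero_iff.2 h₂] at this
  omega

namespace Finset

variable {α : Type*}

theorem head?_sort [LinearOrder α] {s : Finset α} (hs : s.Nonempty) :
    s.sort.head? = some (s.min' hs) := by
  simp [List.head?_eq_getElem?, min'_eq_sorted_zero]

theorem getLast?_sort [LinearOrder α] {s : Finset α} (hs : s.Nonempty) :
    s.sort.getLast? = some (s.max' hs) := by
  simp [List.getLast?_eq_getElem?, max'_eq_sorted_last]

theorem eq_of_sort_prefix [LinearOrder α] {s t : Finset α} (h : s.sort <+: t.sort) {a : α}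
    (ha : a ∈ s) (hmax : ∀ b ∈ t, b ≤ a) : s = t := by
  obtain ⟨u, hu⟩ := h
  have hu_nil : u = [] := by
    refine List.eq_nil_iff_forall_not_mem.2 fun b hb => ?_
    have hsorted := t.sortedLT_sort.pairwise
    rw [← hu, List.pairwise_append] at hsorted
    refine (hmax b ?_).not_gt (hsorted.2.2 a ((mem_sort _).2 ha) b hb)
    rw [← mem_sort (· ≤ ·), ← hu]
    exact List.mem_append_right _ hb
  rw [hu_nil, List.append_nil] at hu
  ext x
  rw [← mem_sort (· ≤ ·), hu, mem_sort]

theorem card_filter_mem_and_notMem [Fintype α] [DecidableEq α] {a b : α} (hab : a ≠ b) :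
    (univ.filter fun s : Finset α => a ∈ s ∧ b ∉ s).card = 2 ^ (Fintype.card α - 2) := by
  have hmem (s : Finset α) : s ∈ ({a, b}ᶜ : Finset α).powerset ↔ a ∉ s ∧ b ∉ s := by
    rw [mem_powerset, subset_compl_iff_disjoint_right, disjoint_insert_right,
      disjoint_singleton_right]
  calc _ = ({a, b}ᶜ : Finset α).powerset.card := by
        refine card_nbij' (fun s => s.erase a) (insert a) ?_ ?_ ?_ ?_
        · intro s hs
          rw [mem_coe, mem_filter] at hs
          exact (hmem _).2 ⟨notMem_erase a s, fun h => hs.2.2 (mem_of_mem_erase h)⟩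
        · intro s hs
          rw [mem_coe, hmem] at hs
          rw [mem_coe, mem_filter, mem_insert, mem_insert, not_or]
          exact ⟨mem_univ _, Or.inl rfl, hab.symm, hs.2⟩
        · intro s hs
          exact insert_erase (mem_filter.1 hs).2.1
        · intro s hs
          exact erase_insert ((hmem s).1 hs).1
    _ = 2 ^ (Fintype.card α - 2) := by
        rw [card_powerset, card_compl, card_pair hab]

end Finset

section Grassmannian

variable {n : ℕ}

theorem strictMono_val_add_one : StrictMono fun v : Fin n => (v : ℕ) + 1 :=
  Fin.val_strictMono.add_const 1

theorem permToList_eq_map (σ : Equiv.Perm (Fin n)) :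
    permToList σ = (List.ofFn σ).map fun v : Fin n => (v : ℕ) + 1 := by
  rw [List.map_ofFn]
  rfl

theorem getD_permToList (σ : Equiv.Perm (Fin n)) (i : Fin n) :
    (permToList σ).getD i 0 = σ i + 1 := by
  simp [permToList]

theorem getD_zero_permToList (σ : Equiv.Perm (Fin (n + 1))) :
    (permToList σ).getD 0 0 = σ 0 + 1 :=
  getD_permToList σ 0

theorem getD_permToList_last (σ : Equiv.Perm (Fin (n + 1))) :
    (permToList σ).getD n 0 = σ (Fin.last n) + 1 :=
  getD_permToList σ (Fin.last n)

def grassmannianList (A : Finset (Fin n)) : List (Fin n) := A.sort ++ Aᶜ.sort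

theorem length_grassmannianList (A : Finset (Fin n)) : (grassmannianList A).length = n := by
  simp [grassmannianList, Finset.card_add_card_compl]

theorem nodup_grassmannianList (A : Finset (Fin n)) : (grassmannianList A).Nodup :=
  (A.sort_nodup _).append (Aᶜ.sort_nodup _) fun _ ha hac => by simp_all

theorem mem_grassmannianList (A : Finset (Fin n)) (v : Fin n) : v ∈ grassmannianList A := by
  by_cases hv : v ∈ A <;> simp [grassmannianList, hv]

def grassmannianPerm (A : Finset (Fin n)) : Equiv.Perm (Fin n) :=
  (finCongr (length_grassmannianList A).symm).trans
    ((nodup_grassmannianList A).getEquivOfForallMemList _ (mem_grassmannianList A))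

theorem ofFn_grassmannianPerm (A : Finset (Fin n)) :
    List.ofFn (grassmannianPerm A) = grassmannianList A := by
  conv_rhs => rw [← List.ofFn_get (grassmannianList A)]
  rw [List.ofFn_congr (length_grassmannianList A).symm]
  rfl

theorem descents_permToList_grassmannianPerm_le_one (A : Finset (Fin n)) :
    descents (permToList (grassmannianPerm A)) ≤ 1 := by
  rw [permToList_eq_map, ofFn_grassmannianPerm, grassmannianList, List.map_append]
  exact descents_le_one_iff.2 ⟨_, _, rfl,
    strictMono_val_add_one.sortedLE_listMap.2 A.sortedLT_sort.sortedLE,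
    strictMono_val_add_one.sortedLE_listMap.2 Aᶜ.sortedLT_sort.sortedLE⟩

theorem grassmannianList_toFinset {l₁ l₂ : List (Fin n)} (hnd : (l₁ ++ l₂).Nodup)
    (hmem : ∀ v, v ∈ l₁ ++ l₂) (h₁ : l₁.SortedLE) (h₂ : l₂.SortedLE) :
    grassmannianList l₁.toFinset = l₁ ++ l₂ := by
  obtain ⟨hnd₁, hnd₂, hdisj⟩ := List.nodup_append.1 hnd
  have hcompl : l₁.toFinsetᶜ = l₂.toFinset := by
    ext v
    have := hmem v
    simp only [Finset.mem_compl, List.mem_toFinset, List.mem_append] at this ⊢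
    exact ⟨fun h => this.resolve_left h, fun h h' => hdisj v h' v h rfl⟩
  rw [grassmannianList, hcompl, (List.toFinset_sort _ hnd₁).2 h₁.pairwise,
    (List.toFinset_sort _ hnd₂).2 h₂.pairwise]

theorem exists_grassmannianPerm_eq (σ : Equiv.Perm (Fin n))
    (h : descents (permToList σ) ≤ 1) : ∃ A, grassmannianPerm A = σ := by
  rw [permToList_eq_map] at h
  obtain ⟨m₁, m₂, hm, hm₁, hm₂⟩ := descents_le_one_iff.1 h
  obtain ⟨l₁, l₂, hl, rfl, rfl⟩ := List.map_eq_append_iff.1 hm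
  rw [strictMono_val_add_one.sortedLE_listMap] at hm₁ hm₂
  refine ⟨l₁.toFinset, Equiv.coe_fn_injective (List.ofFn_injective ?_)⟩
  rw [ofFn_grassmannianPerm, hl]
  refine grassmannianList_toFinset (hl ▸ List.nodup_ofFn.2 σ.injective) (fun v => ?_) hm₁ hm₂
  exact hl ▸ List.mem_ofFn.2 ⟨σ.symm v, σ.apply_symm_apply v⟩

theorem apply_zero_eq_zero_of_descents_eq_zero (σ : Equiv.Perm (Fin (n + 1)))
    (h : descents (permToList σ) = 0) : σ 0 = 0 := by
  have hmono : Monotone fun i => (σ i : ℕ) + 1 :=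
    List.sortedLE_ofFn_iff.1 (descents_eq_zero_iff.1 h)
  have := hmono (Fin.zero_le (σ.symm 0))
  simp only [Equiv.apply_symm_apply, Fin.val_zero, add_le_add_iff_right, Nat.le_zero] at this
  exact Fin.ext this

theorem grassmannianPerm_zero {A : Finset (Fin (n + 1))} (hA : A.Nonempty) :
    grassmannianPerm A 0 = A.min' hA := by
  have := congrArg List.head? (ofFn_grassmannianPerm A)
  rwa [List.ofFn_succ, grassmannianList, List.head?_append, Finset.head?_sort hA,
    List.head?_cons, Option.some_or, Option.some_inj] at this

theorem grassmannianPerm_last {A : Finset (Fin (n + 1))} (hA : Aᶜ.Nonempty) :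
    grassmannianPerm A (Fin.last n) = Aᶜ.max' hA := by
  have := congrArg List.getLast? (ofFn_grassmannianPerm A)
  rwa [List.ofFn_succ', List.concat_eq_append, grassmannianList, List.getLast?_append,
    List.getLast?_append, Finset.getLast?_sort hA, List.getLast?_singleton, Option.some_or,
    Option.some_or, Option.some_inj] at this

theorem grassmannianPerm_injOn :
    Set.InjOn grassmannianPerm {A : Finset (Fin (n + 1)) | Fin.last n ∈ A} := by
  intro A hA A' hA' h
  have hL : grassmannianList A = grassmannianList A' := by
    rw [← ofFn_grassmannianPerm, h, ofFn_grassmannianPerm]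
  have hpre : A.sort <+: grassmannianList A' := hL ▸ List.prefix_append _ _
  rcases List.prefix_or_prefix_of_prefix hpre (List.prefix_append _ _) with hp | hp
  · exact Finset.eq_of_sort_prefix hp hA fun b _ => Fin.le_last b
  · exact (Finset.eq_of_sort_prefix hp hA' fun b _ => Fin.le_last b).symm

theorem descents_eq_one_and_ne_iff (σ : Equiv.Perm (Fin (n + 1))) :
    (descents (permToList σ) = 1 ∧ σ 0 ≠ 0 ∧ σ (Fin.last n) ≠ Fin.last n) ↔
      ∃ A, (Fin.last n ∈ A ∧ 0 ∉ A) ∧ grassmannianPerm A = σ := by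
  constructor
  · rintro ⟨hd, h0, hlast⟩
    obtain ⟨A, rfl⟩ := exists_grassmannianPerm_eq σ hd.le
    refine ⟨A, ⟨?_, fun hA0 => h0 ?_⟩, rfl⟩
    · by_contra hA
      have hAc : Fin.last n ∈ Aᶜ := Finset.mem_compl.2 hA
      exact hlast (by
        rw [grassmannianPerm_last ⟨_, hAc⟩]
        exact le_antisymm (Fin.le_last _) (Finset.le_max' _ _ hAc))
    · rw [grassmannianPerm_zero ⟨_, hA0⟩]
      exact le_antisymm (Finset.min'_le _ _ hA0) (Fin.zero_le _)
  · rintro ⟨A, ⟨hlast, h0⟩, rfl⟩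
    have hz : grassmannianPerm A 0 ≠ 0 := by
      rw [grassmannianPerm_zero ⟨_, hlast⟩]
      exact fun h => h0 (h ▸ Finset.min'_mem _ _)
    refine ⟨le_antisymm (descents_permToList_grassmannianPerm_le_one A)
      (Nat.one_le_iff_ne_zero.2 fun h => hz (apply_zero_eq_zero_of_descents_eq_zero _ h)), hz, ?_⟩
    rw [grassmannianPerm_last ⟨0, Finset.mem_compl.2 h0⟩]
    exact fun h => Finset.mem_compl.1 (h ▸ Finset.max'_mem _ _) hlast

end Grassmannian

theorem stmt3 (K : ℕ) (hK : 2 ≤ K) :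
    (Finset.univ.filter (fun σ : Equiv.Perm (Fin (K + 1)) =>
        descents (permToList σ) = 1 ∧ (permToList σ).getD 0 0 ≠ 1 ∧
          (permToList σ).getD K 0 ≠ K + 1)).card = 2 ^ (K - 1) := by
  have hlast : Fin.last K ≠ 0 := Fin.ne_of_val_ne (by rw [Fin.val_last, Fin.val_zero]; omega)
  calc _ = ((Finset.univ.filter fun A : Finset (Fin (K + 1)) => Fin.last K ∈ A ∧ 0 ∉ A).image
          grassmannianPerm).card := by
        congr 1
        ext σ
        simp only [Finset.mem_filter, Finset.mem_univ, true_and, Finset.mem_image,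
          getD_zero_permToList, getD_permToList_last, ← descents_eq_one_and_ne_iff, Ne,
          Nat.add_right_cancel_iff, Nat.add_eq_right, Fin.ext_iff, Fin.val_last, Fin.val_zero]
    _ = 2 ^ (K - 1) := by
        rw [Finset.card_image_of_injOn (grassmannianPerm_injOn.mono fun A hA =>
          (Finset.mem_filter.1 hA).2.1), Finset.card_filter_mem_and_notMem hlast]
        simp
end

section
/- If a permutation σ has d ≥ 1 descents and is minimal with respect to pattern containment among permutations with d descents (i.e., every strict pattern of σ has fewer than d descents), then σ has no two consecutive ascents, and consequently σ has size at most 2d. -/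
def IsPermList (n : ℕ) (l : List ℕ) : Prop :=
  l.Perm (List.range' 1 n)
def OrderIsoList (a b : List ℕ) : Prop :=
  a.length = b.length ∧
    ∀ i j, i < j → j < a.length → (a.getD i 0 < a.getD j 0 ↔ b.getD i 0 < b.getD j 0)

def IsPattern (π σ : List ℕ) : Prop :=
  ∃ s, s.Sublist σ ∧ OrderIsoList π s

namespace Descents

@[simp]
lemma descents_singleton (a : ℕ) : descents [a] = 0 := rfl

lemma descents_cons_cons (a b : ℕ) (t : List ℕ) :
    descents (a :: b :: t) = descents (b :: t) + if b < a then 1 else 0 := by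
  simp [descents, List.countP_cons]

lemma descents_map_of_lt_iff {l : List ℕ} {f : ℕ → ℕ}
    (hf : ∀ x ∈ l, ∀ y ∈ l, f x < f y ↔ x < y) : descents (l.map f) = descents l := by
  induction l with
  | nil => rfl
  | cons a t ih =>
    cases t with
    | nil => rfl
    | cons b t =>
      simp only [List.map_cons] at ih ⊢
      rw [descents_cons_cons, descents_cons_cons,
        ih fun x hx y hy => hf x (.tail _ hx) y (.tail _ hy)]
      simp only [hf b (by simp) a (by simp)]

lemma descents_append_cons_of_le {u v : List ℕ} {y : ℕ}
    (hu : ∀ x ∈ u.getLast?, x ≤ y) (hv : ∀ z ∈ v.head?, y ≤ z) :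
    descents (u ++ y :: v) = descents (u ++ v) := by
  induction u with
  | nil =>
    cases v with
    | nil => rfl
    | cons z w => simp [descents_cons_cons, hv z rfl]
  | cons a u ih =>
    cases u with
    | nil =>
      have hay : a ≤ y := hu a rfl
      cases v with
      | nil => simp [descents_cons_cons, hay]
      | cons z w =>
        have hyz : y ≤ z := hv z rfl
        simp [descents_cons_cons, not_lt.2 hay, not_lt.2 hyz, show ¬ z < a by omega]
    | cons b u =>
      simp only [List.cons_append, descents_cons_cons] at ih ⊢
      rw [ih (fun x hx => hu x (by simpa using hx))]

def descentSet (l : List ℕ) : Finset ℕ :=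
  (Finset.range (l.length - 1)).filter fun i => l.getD (i + 1) 0 < l.getD i 0

lemma mem_descentSet {l : List ℕ} {i : ℕ} :
    i ∈ descentSet l ↔ i + 1 < l.length ∧ l.getD (i + 1) 0 < l.getD i 0 := by
  simp only [descentSet, Finset.mem_filter, Finset.mem_range]
  omega

lemma card_descentSet (l : List ℕ) : (descentSet l).card = descents l := by
  induction l with
  | nil => rfl
  | cons a t ih =>
    cases t with
    | nil => rfl
    | cons b t =>
      rw [descents_cons_cons, ← ih]
      simp only [descentSet, Finset.card_filter, List.length_cons, Nat.add_sub_cancel,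
        Finset.sum_range_succ', List.getD_cons_succ, List.getD_cons_zero]

lemma descents_eraseIdx {l : List ℕ} {i : ℕ} (hi : i < l.length)
    (h : ∀ j ∈ descentSet l, i ≠ j ∧ i ≠ j + 1) : descents (l.eraseIdx i) = descents l := by
  have hsplit : l = l.take i ++ l[i] :: l.drop (i + 1) := by
    rw [List.getElem_cons_drop, List.take_append_drop]
  have hprev : ∀ x ∈ (l.take i).getLast?, x ≤ l[i] := by
    intro x hx
    rw [List.getLast?_take] at hx
    split_ifs at hx with hi0
    · simp at hx
    · rw [List.getElem?_eq_getElem (by omega)] at hx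
      obtain rfl : l[i - 1] = x := by simpa using hx
      by_contra hlt
      have hmem : i - 1 ∈ descentSet l := by
        rw [mem_descentSet, Nat.sub_add_cancel (by omega), List.getD_eq_getElem _ _ hi,
          List.getD_eq_getElem _ _ (by omega)]
        omega
      exact (h _ hmem).2 (by omega)
  have hnext : ∀ z ∈ (l.drop (i + 1)).head?, l[i] ≤ z := by
    intro z hz
    rw [List.head?_drop] at hz
    obtain ⟨hi1, rfl⟩ := List.getElem?_eq_some_iff.1 hz
    by_contra hlt
    have hmem : i ∈ descentSet l := by
      rw [mem_descentSet, List.getD_eq_getElem _ _ hi1, List.getD_eq_getElem _ _ hi]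
      omega
    exact (h _ hmem).1 rfl
  conv_rhs => rw [hsplit]
  rw [List.eraseIdx_eq_take_drop_succ, descents_append_cons_of_le hprev hnext]

def CoveredByDescents (l : List ℕ) : Prop :=
  ∀ i < l.length, ∃ j ∈ descentSet l, i = j ∨ i = j + 1

lemma coveredByDescents_of_descents_eraseIdx_lt {l : List ℕ}
    (h : ∀ i < l.length, descents (l.eraseIdx i) < descents l) : CoveredByDescents l := by
  intro i hi
  by_contra! hfar
  exact (h i hi).ne (descents_eraseIdx hi hfar)

lemma CoveredByDescents.length_le {l : List ℕ} (h : CoveredByDescents l) :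
    l.length ≤ 2 * descents l := by
  have hsub : Finset.range l.length ⊆ descentSet l ∪ (descentSet l).image (· + 1) := by
    intro i hi
    obtain ⟨j, hj, rfl | rfl⟩ := h i (Finset.mem_range.1 hi)
    · exact Finset.mem_union_left _ hj
    · exact Finset.mem_union_right _ (Finset.mem_image_of_mem _ hj)
  calc l.length = (Finset.range l.length).card := (Finset.card_range _).symm
    _ ≤ (descentSet l ∪ (descentSet l).image (· + 1)).card := Finset.card_le_card hsub
    _ ≤ (descentSet l).card + (descentSet l).card :=
        (Finset.card_union_le _ _).trans (Nat.add_le_add_left Finset.card_image_le _)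
    _ = 2 * descents l := by rw [card_descentSet]; ring

lemma CoveredByDescents.not_two_ascents {l : List ℕ} (h : CoveredByDescents l) :
    ¬ ∃ i, i + 2 < l.length ∧ l.getD i 0 < l.getD (i + 1) 0 ∧
      l.getD (i + 1) 0 < l.getD (i + 2) 0 := by
  rintro ⟨i, hi, hasc, hasc'⟩
  obtain ⟨j, hj, hij | hij⟩ := h (i + 1) (by omega)
  · subst hij
    exact (mem_descentSet.1 hj).2.not_gt hasc'
  · obtain rfl : i = j := by omega
    exact (mem_descentSet.1 hj).2.not_gt hasc

end Descents

namespace Standardization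

def rankIn (l : List ℕ) (x : ℕ) : ℕ := l.countP (· < x) + 1

def standardize (l : List ℕ) : List ℕ := l.map (rankIn l)

lemma rankIn_mono (l : List ℕ) : Monotone (rankIn l) := fun x y hxy =>
  Nat.add_le_add_right (List.countP_mono_left fun z _ hz => by simp at hz ⊢; omega) 1

lemma rankIn_lt_rankIn {l : List ℕ} {x y : ℕ} (hx : x ∈ l) (hxy : x < y) :
    rankIn l x < rankIn l y := by
  obtain ⟨u, v, rfl⟩ := List.append_of_mem hx
  have hu := List.countP_mono_left (p := (· < x)) (q := (· < y)) (l := u)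
    fun z _ hz => by simp at hz ⊢; omega
  have hv := List.countP_mono_left (p := (· < x)) (q := (· < y)) (l := v)
    fun z _ hz => by simp at hz ⊢; omega
  simp [rankIn, List.countP_append, hxy]
  omega

lemma rankIn_lt_rankIn_iff {l : List ℕ} {x y : ℕ} (hx : x ∈ l) :
    rankIn l x < rankIn l y ↔ x < y :=
  ⟨fun h => lt_of_not_ge fun hyx => h.not_ge (rankIn_mono l hyx), rankIn_lt_rankIn hx⟩

lemma rankIn_mem_range' {l : List ℕ} {x : ℕ} (hx : x ∈ l) :
    rankIn l x ∈ List.range' 1 l.length := by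
  have : l.countP (· < x) < l.length :=
    List.countP_lt_length_iff.2 ⟨x, hx, by simp⟩
  rw [List.mem_range']
  exact ⟨l.countP (· < x), this, by rw [rankIn]; ring⟩

lemma isPermList_standardize {l : List ℕ} (hl : l.Nodup) :
    IsPermList l.length (standardize l) := by
  have hnodup : (standardize l).Nodup :=
    hl.map_on fun x hx y hy hxy => le_antisymm
      (le_of_not_gt fun h => (rankIn_lt_rankIn hy h).ne' hxy)
      (le_of_not_gt fun h => (rankIn_lt_rankIn hx h).ne' hxy.symm)
  refine (List.subperm_of_subset hnodup fun r hr => ?_).perm_of_length_le (by simp [standardize])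
  obtain ⟨x, hx, rfl⟩ := List.mem_map.1 hr
  exact rankIn_mem_range' hx

lemma orderIsoList_standardize (l : List ℕ) : OrderIsoList (standardize l) l := by
  refine ⟨List.length_map _, fun i j hij hj => ?_⟩
  have hj' : j < l.length := by simpa [standardize] using hj
  simp only [standardize, List.getD_eq_getElem?_getD, List.getElem?_map,
    List.getElem?_eq_getElem hj', List.getElem?_eq_getElem (hij.trans hj'), Option.map_some,
    Option.getD_some]
  exact rankIn_lt_rankIn_iff (List.getElem_mem _)

lemma descents_standardize (l : List ℕ) : descents (standardize l) = descents l :=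
  Descents.descents_map_of_lt_iff fun _ hx _ _ => rankIn_lt_rankIn_iff hx

lemma descents_lt_of_sublist_of_minimal {l : List ℕ} (hl : l.Nodup) {d : ℕ}
    (hmin : ∀ m π, IsPermList m π → IsPattern π l → π.length < l.length → descents π < d)
    {s : List ℕ} (hs : s.Sublist l) (hlen : s.length < l.length) : descents s < d := by
  rw [← descents_standardize]
  exact hmin _ _ (isPermList_standardize (hs.nodup hl)) ⟨s, hs, orderIsoList_standardize s⟩
    (by simpa [standardize] using hlen)

end Standardization

open Descents Standardization in
theorem stmt5_general (n d : ℕ) (l : List ℕ) (h : IsPermList n l)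
    (hdesc : descents l = d)
    (hmin : ∀ m π, IsPermList m π → IsPattern π l → π.length < l.length → descents π < d) :
    (¬ ∃ i, i + 2 < l.length ∧ l.getD i 0 < l.getD (i + 1) 0 ∧
        l.getD (i + 1) 0 < l.getD (i + 2) 0) ∧
      l.length ≤ 2 * d := by
  have hnodup : l.Nodup := h.nodup_iff.2 List.nodup_range'
  have hcover : CoveredByDescents l := coveredByDescents_of_descents_eraseIdx_lt fun i hi =>
    hdesc ▸ descents_lt_of_sublist_of_minimal hnodup hmin (List.eraseIdx_sublist l i)
      (by rw [List.length_eraseIdx_of_lt hi]; omega)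
  exact ⟨hcover.not_two_ascents, hdesc ▸ hcover.length_le⟩

theorem stmt5 (n d : ℕ) (hd : 1 ≤ d) (l : List ℕ) (h : IsPermList n l)
    (hdesc : descents l = d)
    (hmin : ∀ m π, IsPermList m π → IsPattern π l → π.length < l.length → descents π < d) :
    (¬ ∃ i, i + 2 < l.length ∧ l.getD i 0 < l.getD (i + 1) 0 ∧
        l.getD (i + 1) 0 < l.getD (i + 2) 0) ∧
      l.length ≤ 2 * d :=
  stmt5_general n d l h hdesc hmin
end

section
/- If a permutation σ can be obtained from the identity permutation by at most p duplication-loss steps of width at most K, and π is a pattern of σ, then π can be obtained from the identity permutation (of the appropriate size) by at most p duplication-loss steps of width at most K. -/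
inductive Interleave : List ℕ → List ℕ → List ℕ → Prop
  | nil : Interleave [] [] []
  | left {x : ℕ} {l a b : List ℕ} : Interleave l a b → Interleave (x :: l) (x :: a) b
  | right {x : ℕ} {l a b : List ℕ} : Interleave l a b → Interleave (x :: l) a (x :: b)

def DLStep (K : ℕ) (τ σ : List ℕ) : Prop :=
  ∃ pre w post w1 w2 : List ℕ, τ = pre ++ w ++ post ∧ w.length ≤ K ∧
    Interleave w w1 w2 ∧ σ = pre ++ (w1 ++ w2) ++ post

def DLIter (K : ℕ) : ℕ → List ℕ → List ℕ → Prop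
  | 0, τ, σ => τ = σ
  | p + 1, τ, σ => ∃ μ, DLStep K τ μ ∧ DLIter K p μ σ

def ObtainableIn (K p : ℕ) (τ σ : List ℕ) : Prop :=
  ∃ q ≤ p, DLIter K q τ σ

/-!
A duplication-loss step commutes with passing to a subsequence: a subsequence of the result of
a step is the result of a step (of no larger width) applied to a subsequence of its input, since
a sub-interleaving of an interleaving is an interleaving of the corresponding subsequences.
Iterating, an occurrence `s` of `π` in `σ` is obtained in `q` steps from a subsequence `t` of
the identity, i.e. from an increasing list. Steps are blind to values, so relabelling by the
order-preserving map that sends `s` to `π` turns `t` into the identity of size `|π|` and the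
`q` steps into steps producing `π`.
-/

namespace Interleave

theorem perm {l a b : List ℕ} (h : Interleave l a b) : l.Perm (a ++ b) := by
  induction h with
  | nil => simp
  | left _ ih => exact ih.cons _
  | right _ ih => exact (ih.cons _).trans List.perm_middle.symm

theorem map (f : ℕ → ℕ) {l a b : List ℕ} (h : Interleave l a b) :
    Interleave (l.map f) (a.map f) (b.map f) := by
  induction h with
  | nil => exact .nil
  | left _ ih => exact .left ih
  | right _ ih => exact .right ih

theorem exists_sublist_of_sublist {l a b a' b' : List ℕ} (h : Interleave l a b)
    (ha : a'.Sublist a) (hb : b'.Sublist b) : ∃ l', l'.Sublist l ∧ Interleave l' a' b' := by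
  induction h generalizing a' b' with
  | nil =>
    rw [List.sublist_nil] at ha hb
    subst ha hb
    exact ⟨[], .slnil, .nil⟩
  | left _ ih =>
    cases ha with
    | cons _ ha =>
      obtain ⟨l', hl', hi⟩ := ih ha hb
      exact ⟨l', hl'.cons _, hi⟩
    | cons_cons _ ha =>
      obtain ⟨l', hl', hi⟩ := ih ha hb
      exact ⟨_, hl'.cons_cons _, hi.left⟩
  | right _ ih =>
    cases hb with
    | cons _ hb =>
      obtain ⟨l', hl', hi⟩ := ih ha hb
      exact ⟨l', hl'.cons _, hi⟩
    | cons_cons _ hb =>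
      obtain ⟨l', hl', hi⟩ := ih ha hb
      exact ⟨_, hl'.cons_cons _, hi.right⟩

end Interleave

namespace DLStep

variable {K : ℕ} {τ σ : List ℕ}

theorem perm (h : DLStep K τ σ) : τ.Perm σ := by
  obtain ⟨pre, w, post, w₁, w₂, rfl, -, hw, rfl⟩ := h
  simpa using (hw.perm.append_right post).append_left pre

theorem map (f : ℕ → ℕ) (h : DLStep K τ σ) : DLStep K (τ.map f) (σ.map f) := by
  obtain ⟨pre, w, post, w₁, w₂, rfl, hK, hw, rfl⟩ := h
  exact ⟨pre.map f, w.map f, post.map f, w₁.map f, w₂.map f, by simp, by simpa using hK,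
    hw.map f, by simp⟩

theorem exists_sublist_of_sublist {s : List ℕ} (h : DLStep K τ σ) (hs : s.Sublist σ) :
    ∃ t, t.Sublist τ ∧ DLStep K t s := by
  obtain ⟨pre, w, post, w₁, w₂, rfl, hK, hw, rfl⟩ := h
  obtain ⟨s₀, s₃, rfl, hs₀₁₂, hs₃⟩ := List.sublist_append_iff.mp hs
  obtain ⟨s₀, s₁₂, rfl, hs₀, hs₁₂⟩ := List.sublist_append_iff.mp hs₀₁₂
  obtain ⟨s₁, s₂, rfl, hs₁, hs₂⟩ := List.sublist_append_iff.mp hs₁₂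
  obtain ⟨u, hu, hi⟩ := hw.exists_sublist_of_sublist hs₁ hs₂
  exact ⟨s₀ ++ u ++ s₃, (hs₀.append hu).append hs₃,
    s₀, u, s₃, s₁, s₂, rfl, hu.length_le.trans hK, hi, rfl⟩

end DLStep

namespace DLIter

variable {K : ℕ}

theorem perm {q : ℕ} {τ σ : List ℕ} (h : DLIter K q τ σ) : τ.Perm σ := by
  induction q generalizing τ with
  | zero => exact h ▸ .refl τ
  | succ q ih =>
    obtain ⟨μ, hstep, hiter⟩ := h
    exact hstep.perm.trans (ih hiter)

theorem map (f : ℕ → ℕ) {q : ℕ} {τ σ : List ℕ} (h : DLIter K q τ σ) :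
    DLIter K q (τ.map f) (σ.map f) := by
  induction q generalizing τ with
  | zero => exact congrArg (List.map f) h
  | succ q ih =>
    obtain ⟨μ, hstep, hiter⟩ := h
    exact ⟨μ.map f, hstep.map f, ih hiter⟩

theorem exists_sublist_of_sublist {q : ℕ} {τ σ s : List ℕ} (h : DLIter K q τ σ)
    (hs : s.Sublist σ) : ∃ t, t.Sublist τ ∧ DLIter K q t s := by
  induction q generalizing τ with
  | zero => exact ⟨s, h ▸ hs, rfl⟩
  | succ q ih =>
    obtain ⟨μ, hstep, hiter⟩ := h
    obtain ⟨t', ht', hiter'⟩ := ih hiter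
    obtain ⟨t, ht, hstep'⟩ := hstep.exists_sublist_of_sublist ht'
    exact ⟨t, ht, t', hstep', hiter'⟩

end DLIter

namespace OrderIsoList

theorem getD_lt_getD_iff {a b : List ℕ} (h : OrderIsoList a b) (ha : a.Nodup) (hb : b.Nodup)
    {i j : ℕ} (hi : i < a.length) (hj : j < a.length) :
    a.getD i 0 < a.getD j 0 ↔ b.getD i 0 < b.getD j 0 := by
  obtain ⟨hlen, hiso⟩ := h
  rcases Nat.lt_trichotomy i j with hij | rfl | hji
  · exact hiso i j hij hj
  · simp
  · have hane : a.getD i 0 ≠ a.getD j 0 := by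
      simpa [List.getD_eq_getElem, hi, hj, ha.getElem_inj_iff] using hji.ne'
    have hbne : b.getD i 0 ≠ b.getD j 0 := by
      simpa [List.getD_eq_getElem, ← hlen, hi, hj, hb.getElem_inj_iff] using hji.ne'
    have := hiso j i hji hi
    omega

theorem exists_strictMonoOn_map_eq {π s : List ℕ} (h : OrderIsoList π s) (hπ : π.Nodup)
    (hs : s.Nodup) : ∃ g : ℕ → ℕ, StrictMonoOn g {x | x ∈ s} ∧ s.map g = π := by
  have hlen : π.length = s.length := h.1
  refine ⟨fun x => π.getD (s.idxOf x) 0, ?_, ?_⟩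
  · rintro _ hx _ hy hxy
    obtain ⟨i, hi, rfl⟩ := List.mem_iff_getElem.mp hx
    obtain ⟨j, hj, rfl⟩ := List.mem_iff_getElem.mp hy
    have hlt := (h.getD_lt_getD_iff hπ hs (hlen ▸ hi) (hlen ▸ hj)).mpr
      (by simpa [hi, hj] using hxy)
    simpa [hs.idxOf_getElem] using hlt
  · exact List.ext_getElem (by simp [hlen]) fun i _ hi => by
      simp [hs.idxOf_getElem, hi]

end OrderIsoList

theorem stmt7_general (n m K p : ℕ) (σ π : List ℕ) (hπ : IsPermList m π)
    (hobt : ObtainableIn K p (List.range' 1 n) σ) (hpat : IsPattern π σ) :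
    ObtainableIn K p (List.range' 1 m) π := by
  obtain ⟨q, hq, hiter⟩ := hobt
  obtain ⟨s, hsσ, hiso⟩ := hpat
  obtain ⟨t, ht, hts⟩ := hiter.exists_sublist_of_sublist hsσ
  have ht_lt : t.Pairwise (· < ·) := List.Pairwise.sublist ht List.pairwise_lt_range'
  obtain ⟨g, hg, hsg⟩ := hiso.exists_strictMonoOn_map_eq (hπ.nodup_iff.mpr List.nodup_range')
    (hts.perm.nodup_iff.mp ht_lt.nodup)
  have htg_lt : (t.map g).Pairwise (· < ·) :=
    List.pairwise_map.mpr <| ht_lt.imp_of_mem fun ha hb hab =>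
      hg (hts.perm.subset ha) (hts.perm.subset hb) hab
  have htg : t.map g = List.range' 1 m :=
    ((hts.perm.map g).trans (hsg ▸ hπ)).eq_of_sortedLE
      (List.sortedLT_iff_pairwise.mpr htg_lt).sortedLE
      (List.sortedLT_iff_pairwise.mpr List.pairwise_lt_range').sortedLE
  exact ⟨q, hq, by simpa [htg, hsg] using hts.map g⟩

theorem stmt7 (n m K p : ℕ) (σ π : List ℕ) (hσ : IsPermList n σ) (hπ : IsPermList m π)
    (hobt : ObtainableIn K p (List.range' 1 n) σ) (hpat : IsPattern π σ) :
    ObtainableIn K p (List.range' 1 m) π :=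
  stmt7_general n m K p σ π hπ hobt hpat
end

section
/- Let σ ∈ Sₙ and let τ be the permutation of size n−1 obtained from σ by removing one element j (and renormalizing values). For any i ≠ j that is not a fixpoint of σ, either the corresponding element becomes a fixpoint in τ, or the size of its vp-vector in τ differs from the size of its vp-vector in σ by at most 1. -/
def removeElem (l : List ℕ) (j : ℕ) : List ℕ :=
  (l.erase j).map (fun x => if j < x then x - 1 else x)

/-!
Removing `j` moves the position of every other entry `i` back by at most one (by exactly one
when `j` stood before `i`), and renormalizing lowers its value by at most one (by exactly one when
`j < i`). Both ends of the interval between position and value move by at most one in the same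
direction, so the length of the interval changes by at most one.
-/

namespace List

variable {α β : Type*} [BEq α] [LawfulBEq α] [BEq β] [LawfulBEq β]

theorem idxOf_erase_of_ne (l : List α) {a b : α} (hab : a ≠ b) :
    (l.erase b).idxOf a = l.idxOf a ∨ (l.erase b).idxOf a + 1 = l.idxOf a := by
  induction l with
  | nil => simp
  | cons c t ih =>
    by_cases hcb : c = b
    · subst hcb
      rw [erase_cons_head, idxOf_cons_ne _ (Ne.symm hab)]
      exact Or.inr rfl
    · rw [erase_cons_tail (by simpa using hcb)]
      by_cases hca : c = a
      · subst hca
        simp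
      · rw [idxOf_cons_ne _ hca, idxOf_cons_ne _ hca]
        omega

theorem idxOf_map_of_eq_imp_eq (f : α → β) {l : List α} {a : α}
    (hf : ∀ x ∈ l, f x = f a → x = a) : (l.map f).idxOf (f a) = l.idxOf a := by
  induction l with
  | nil => simp
  | cons c t ih =>
    rw [map_cons]
    by_cases hca : c = a
    · subst hca
      simp
    · rw [idxOf_cons_ne _ (fun h => hca (hf c mem_cons_self h)), idxOf_cons_ne _ hca,
        ih fun x hx => hf x (mem_cons_of_mem c hx)]

end List

theorem idxOf_removeElem_of_nodup {l : List ℕ} (hl : l.Nodup) {i j : ℕ} (hij : i ≠ j) :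
    (removeElem l j).idxOf (if j < i then i - 1 else i) = (l.erase j).idxOf i := by
  refine List.idxOf_map_of_eq_imp_eq (fun x => if j < x then x - 1 else x) fun x hx hxi => ?_
  have hxj : x ≠ j := fun h => hl.not_mem_erase (h ▸ hx)
  split_ifs at hxi <;> omega

theorem stmt12_general (n : ℕ) (l : List ℕ) (h : IsPermList n l) (i j : ℕ)
    (hij : i ≠ j) :
    ((removeElem l j).idxOf (if j < i then i - 1 else i) = (if j < i then i - 1 else i) - 1) ∨
      Nat.dist
        (Nat.dist ((removeElem l j).idxOf (if j < i then i - 1 else i))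
          ((if j < i then i - 1 else i) - 1))
        (Nat.dist (l.idxOf i) (i - 1)) ≤ 1 := by
  right
  rw [idxOf_removeElem_of_nodup (h.nodup_iff.mpr List.nodup_range') hij]
  unfold Nat.dist
  rcases List.idxOf_erase_of_ne l hij with hpos | hpos <;> split_ifs <;> omega

theorem stmt12 (n : ℕ) (l : List ℕ) (h : IsPermList n l) (i j : ℕ)
    (hj : j ∈ l) (hi : i ∈ l) (hij : i ≠ j) (hnf : l.idxOf i ≠ i - 1) :
    ((removeElem l j).idxOf (if j < i then i - 1 else i) = (if j < i then i - 1 else i) - 1) ∨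
      Nat.dist
        (Nat.dist ((removeElem l j).idxOf (if j < i then i - 1 else i))
          ((if j < i then i - 1 else i) - 1))
        (Nat.dist (l.idxOf i) (i - 1)) ≤ 1 :=
  stmt12_general n l h i j hij
end

section
/- For every permutation σ of size n ≥ 2, there exists an element j such that the permutation τ obtained from σ by removing j has at most one more fixpoint than σ. -/
def fixCount (l : List ℕ) : ℕ :=
  (List.range l.length).countP (fun k => decide (l.getD k 0 = k + 1))

theorem List.lt_length_of_getD_eq_succ {l : List ℕ} {i k : ℕ} (h : l.getD i 0 = k + 1) :
    i < l.length := by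
  by_contra hi
  rw [List.getD_eq_default _ _ (not_lt.mp hi)] at h
  omega

theorem fixCount_eq_card (l : List ℕ) :
    fixCount l = ((Finset.range l.length).filter (fun k => l.getD k 0 = k + 1)).card := by
  simp [fixCount, Finset.filter, Finset.range, Finset.card, List.countP_eq_length_filter,
    Multiset.range]

theorem fixCount_le_succ_of_injective {l' l : List ℕ} {f : ℕ → ℕ} (hf : f.Injective) (e : ℕ)
    (h : ∀ k ≠ e, l'.getD k 0 = k + 1 → l.getD (f k) 0 = f k + 1) :
    fixCount l' ≤ fixCount l + 1 := by
  rw [fixCount_eq_card, fixCount_eq_card]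
  set T := (Finset.range l'.length).filter (fun k => l'.getD k 0 = k + 1)
  have hmaps : ∀ k ∈ T.erase e, f k ∈ (Finset.range l.length).filter
      (fun k => l.getD k 0 = k + 1) := by
    intro k hk
    obtain ⟨hke, hkT⟩ := Finset.mem_erase.mp hk
    have hfix := h k hke (Finset.mem_filter.mp hkT).2
    exact Finset.mem_filter.mpr ⟨Finset.mem_range.mpr (List.lt_length_of_getD_eq_succ hfix), hfix⟩
  have hinj := Finset.card_le_card_of_injOn f hmaps hf.injOn
  have herase := Finset.pred_card_le_card_erase (s := T) (a := e)
  omega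

theorem List.getD_eraseIdx {α : Type*} (l : List α) (m k : ℕ) (d : α) :
    (l.eraseIdx m).getD k d = l.getD (if k < m then k else k + 1) d := by
  simp only [List.getD_eq_getElem?_getD]
  split_ifs with hk
  · rw [List.getElem?_eraseIdx_of_lt hk]
  · rw [List.getElem?_eraseIdx_of_ge (not_lt.mp hk)]

theorem getD_removeElem {l : List ℕ} (hl : l.Nodup) {m : ℕ} (hm : m < l.length) (k : ℕ) :
    (removeElem l (l.getD m 0)).getD k 0 =
      (fun x => if l.getD m 0 < x then x - 1 else x)
        (l.getD (if k < m then k else k + 1) 0) := by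
  have herase : l.erase (l.getD m 0) = l.eraseIdx m := by
    apply List.erase_eq_eraseIdx_of_idxOf
    rw [List.getD_eq_getElem _ _ hm]
    exact hl.idxOf_getElem m hm
  rw [removeElem, herase, ← List.getD_eraseIdx]
  simpa using List.getD_map (l.eraseIdx m) 0 (fun x => if l.getD m 0 < x then x - 1 else x)

theorem fixpoint_removeElem_cases {l : List ℕ} (hl : l.Nodup) {m k : ℕ} (hm : m < l.length)
    (h : (removeElem l (l.getD m 0)).getD k 0 = k + 1) :
    (k < m ∧ (l.getD k 0 = k + 1 ∨ l.getD m 0 < l.getD k 0 ∧ l.getD k 0 = k + 2)) ∨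
      (m ≤ k ∧ (l.getD (k + 1) 0 = k + 2 ∨
        l.getD (k + 1) 0 < l.getD m 0 ∧ l.getD (k + 1) 0 = k + 1)) := by
  rw [getD_removeElem hl hm] at h
  by_cases hk : k < m
  · simp only [if_pos hk] at h
    split_ifs at h <;> omega
  · simp only [if_neg hk] at h
    split_ifs at h with hlt
    · omega
    · have hk1 := List.lt_length_of_getD_eq_succ h
      have hne : l.getD (k + 1) 0 ≠ l.getD m 0 := by
        rw [List.getD_eq_getElem _ _ hk1, List.getD_eq_getElem _ _ hm, Ne, hl.getElem_inj_iff]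
        omega
      omega

theorem fixCount_removeElem_le_succ {l : List ℕ} (hl : l.Nodup) {m : ℕ} (hm : m < l.length)
    (e : ℕ)
    (hbelow : ∀ k < m, k ≠ e → ¬ (l.getD m 0 < l.getD k 0 ∧ l.getD k 0 = k + 2))
    (habove : ∀ k ≥ m, k ≠ e → ¬ (l.getD (k + 1) 0 < l.getD m 0 ∧ l.getD (k + 1) 0 = k + 1)) :
    fixCount (removeElem l (l.getD m 0)) ≤ fixCount l + 1 := by
  have hinj : (fun k => if k < m then k else k + 1).Injective := by
    intro a b hab
    dsimp only at hab
    split_ifs at hab <;> omega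
  refine fixCount_le_succ_of_injective hinj e fun k hke hk => ?_
  rcases fixpoint_removeElem_cases hl hm hk with ⟨hkm, hold | hnew⟩ | ⟨hkm, hold | hnew⟩
  · simpa [if_pos hkm] using hold
  · exact absurd hnew (hbelow k hkm hke)
  · simpa [if_neg (not_lt.mpr hkm)] using hold
  · exact absurd hnew (habove k hkm hke)

theorem IsPermList.nodup {n : ℕ} {l : List ℕ} (h : IsPermList n l) : l.Nodup :=
  h.nodup_iff.mpr List.nodup_range'

theorem stmt13 (n : ℕ) (hn : 2 ≤ n) (l : List ℕ) (h : IsPermList n l) :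
    ∃ j ∈ l, fixCount (removeElem l j) ≤ fixCount l + 1 := by
  have hlen : l.length = n := by simpa using h.length_eq
  suffices ∃ m < l.length, fixCount (removeElem l (l.getD m 0)) ≤ fixCount l + 1 by
    obtain ⟨m, hm, hle⟩ := this
    exact ⟨_, List.getD_eq_getElem l 0 hm ▸ List.getElem_mem hm, hle⟩
  by_cases hfix : ∃ m, l.getD m 0 = m + 1
  · obtain ⟨m, hm⟩ := hfix
    refine ⟨m, List.lt_length_of_getD_eq_succ hm,
      fixCount_removeElem_le_succ h.nodup (List.lt_length_of_getD_eq_succ hm) 0 ?_ ?_⟩ <;>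
    · intros; omega
  by_cases hsub : ∃ m, l.getD (m + 1) 0 = m + 1
  · obtain ⟨m, hm⟩ := hsub
    refine ⟨m + 1, List.lt_length_of_getD_eq_succ hm,
      fixCount_removeElem_le_succ h.nodup (List.lt_length_of_getD_eq_succ hm) m ?_ ?_⟩ <;>
    · intros; omega
  exact ⟨0, by omega, fixCount_removeElem_le_succ h.nodup (by omega) 0 (by omega)
    fun k _ _ hk => hsub ⟨k, hk.2⟩⟩
end

section
/- If a permutation σ ∈ Sₙ can be obtained from the identity 1 2 ... n by p duplication-loss steps of width at most K, then the vp-domain of σ contains at most Kp elements. -/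
def vpDomain (l : List ℕ) : Set ℕ :=
  {v | v ∈ l ∧ ∃ i ∈ l, l.idxOf i ≠ i - 1 ∧
    min (l.idxOf i) (i - 1) ≤ l.idxOf v ∧ l.idxOf v ≤ max (l.idxOf i) (i - 1)}

lemma Interleave.perm_s14 {l a b : List ℕ} (h : Interleave l a b) : l.Perm (a ++ b) := by
  induction h with
  | nil => exact .nil
  | left _ ih => exact ih.cons _
  | right _ ih => exact (ih.cons _).trans List.perm_middle.symm

def IsInitialCut (l : List ℕ) (c : ℕ) : Prop := (l.take c).Perm (List.range' 1 c)

def cutDefects (l : List ℕ) : Set ℕ := {j | ¬IsInitialCut l j ∨ ¬IsInitialCut l (j + 1)}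

lemma IsInitialCut.idxOf_lt_iff {l : List ℕ} {c i : ℕ} (hc : IsInitialCut l c) (hi : i ∈ l)
    (hi₁ : 1 ≤ i) : l.idxOf i < c ↔ i - 1 < c := by
  rw [← List.mem_take_iff_idxOf_lt hi, hc.mem_iff, List.mem_range'_1]
  omega

lemma idxOf_mem_cutDefects_of_mem_vpDomain {l : List ℕ} (hpos : ∀ x ∈ l, 1 ≤ x) {v : ℕ}
    (hv : v ∈ vpDomain l) : l.idxOf v ∈ cutDefects l := by
  obtain ⟨-, i, hi, hne, hmin, hmax⟩ := hv
  -- such a cut separates the position of `i` from `i - 1`, the position an initial cut forces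
  have hbad : ∀ c, min (l.idxOf i) (i - 1) < c → c ≤ max (l.idxOf i) (i - 1) →
      ¬IsInitialCut l c := fun c h₁ h₂ hc => by
    have := hc.idxOf_lt_iff hi (hpos i hi)
    omega
  by_cases htop : l.idxOf v = max (l.idxOf i) (i - 1)
  · exact Or.inl (hbad _ (by omega) htop.le)
  · exact Or.inr (hbad _ (by omega) (by omega))

lemma take_perm_take_of_perm {α : Type*} {pre w w' post : List α} (hw : w.Perm w') {c : ℕ}
    (hc : c ≤ pre.length ∨ pre.length + w.length ≤ c) :
    ((pre ++ w ++ post).take c).Perm ((pre ++ w' ++ post).take c) := by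
  have hlen := hw.length_eq
  rcases hc with hc | hc
  · rw [List.take_append_of_le_length (by simp; omega), List.take_append_of_le_length hc,
      List.take_append_of_le_length (by simp; omega), List.take_append_of_le_length hc]
  · have hpre : (pre ++ w).take c = pre ++ w := List.take_of_length_le (by simp; omega)
    have hpre' : (pre ++ w').take c = pre ++ w' := List.take_of_length_le (by simp; omega)
    rw [List.take_append (l₁ := pre ++ w), List.take_append (l₁ := pre ++ w'), hpre, hpre']
    simp only [List.length_append, hlen]
    exact (hw.append_left pre).append_right _

lemma DLStep.cutDefects_subset {K : ℕ} {τ σ : List ℕ} (h : DLStep K τ σ) :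
    ∃ F : Finset ℕ, F.card ≤ K ∧ cutDefects σ ⊆ cutDefects τ ∪ F := by
  obtain ⟨pre, w, post, w₁, w₂, rfl, hK, hw, rfl⟩ := h
  have hcut : ∀ c, c ≤ pre.length ∨ pre.length + w.length ≤ c →
      IsInitialCut (pre ++ w ++ post) c → IsInitialCut (pre ++ (w₁ ++ w₂) ++ post) c :=
    fun c hc hcut => (take_perm_take_of_perm hw.perm_s14 hc).symm.trans hcut
  refine ⟨Finset.Ico pre.length (pre.length + w.length), by simpa using hK, ?_⟩
  intro j hj
  by_cases hwin : pre.length ≤ j ∧ j < pre.length + w.length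
  · exact Or.inr (by simpa using hwin)
  · left
    rcases hj with hj | hj
    · exact Or.inl fun h₀ => hj (hcut _ (by omega) h₀)
    · exact Or.inr fun h₁ => hj (hcut _ (by omega) h₁)
lemma DLIter.cutDefects_subset {K : ℕ} : ∀ {q : ℕ} {τ σ : List ℕ}, DLIter K q τ σ →
    ∃ F : Finset ℕ, F.card ≤ K * q ∧ cutDefects σ ⊆ cutDefects τ ∪ F
  | 0, _, _, rfl => ⟨∅, by simp, by simp⟩
  | q + 1, _, _, ⟨_, hstep, hiter⟩ => by
    obtain ⟨F₁, hF₁, hμ⟩ := hstep.cutDefects_subset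
    obtain ⟨F₂, hF₂, hσ⟩ := DLIter.cutDefects_subset hiter
    refine ⟨F₁ ∪ F₂, ?_, ?_⟩
    · calc (F₁ ∪ F₂).card ≤ F₁.card + F₂.card := Finset.card_union_le _ _
        _ ≤ K * (q + 1) := by rw [Nat.mul_succ]; omega
    · calc _ ⊆ cutDefects _ ∪ F₂ := hσ
        _ ⊆ cutDefects _ ∪ F₁ ∪ F₂ := Set.union_subset_union_left _ hμ
        _ = _ := by rw [Finset.coe_union, Set.union_assoc]

lemma isInitialCut_range' {n c : ℕ} (hc : c ≤ n) : IsInitialCut (List.range' 1 n) c := by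
  rw [IsInitialCut, List.take_range'_of_length_ge hc]

lemma cutDefects_range'_subset (n : ℕ) : cutDefects (List.range' 1 n) ⊆ Set.Ici n := by
  intro j hj
  by_contra hjn
  rw [Set.mem_Ici, not_le] at hjn
  rcases hj with hj | hj <;> exact hj (isInitialCut_range' (by omega))

theorem stmt14 (n K p : ℕ) (σ : List ℕ) (h : IsPermList n σ)
    (hobt : ObtainableIn K p (List.range' 1 n) σ) :
    (vpDomain σ).ncard ≤ K * p := by
  obtain ⟨q, hqp, hiter⟩ := hobt
  obtain ⟨F, hF, hdefects⟩ := hiter.cutDefects_subset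
  have hpos : ∀ x ∈ σ, 1 ≤ x := fun x hx => (List.mem_range'_1.1 (h.subset hx)).1
  have hmaps : ∀ v ∈ vpDomain σ, σ.idxOf v ∈ (F : Set ℕ) := by
    intro v hv
    have hlt : σ.idxOf v < n := by
      simpa [h.length_eq] using List.idxOf_lt_length_iff.2 hv.1
    rcases hdefects (idxOf_mem_cutDefects_of_mem_vpDomain hpos hv) with hid | hvF
    · exact absurd (cutDefects_range'_subset n hid) (by simpa using hlt)
    · exact hvF
  calc (vpDomain σ).ncard ≤ (F : Set ℕ).ncard :=
        Set.ncard_le_ncard_of_injOn _ hmaps fun v hv _ _ hvw => (List.idxOf_inj hv.1).1 hvw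
    _ = F.card := Set.ncard_coe_finset F
    _ ≤ K * q := hF
    _ ≤ K * p := Nat.mul_le_mul_left K hqp
end

section
/- Suppose σ = σ' (j+1)(j+2)...n where σ' is a permutation of {1,...,j}. If σ is obtainable from the identity 1 2 ... n by p duplication-loss steps of width at most K, then σ is obtainable by p duplication-loss steps of width at most K in which every duplicated window involves only elements of {1,...,j}. -/
def DLStepR (K j : ℕ) (τ σ : List ℕ) : Prop :=
  ∃ pre w post w1 w2 : List ℕ, τ = pre ++ w ++ post ∧ w.length ≤ K ∧
    (∀ x ∈ w, x ≤ j) ∧ Interleave w w1 w2 ∧ σ = pre ++ (w1 ++ w2) ++ post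

def DLIterR (K j : ℕ) : ℕ → List ℕ → List ℕ → Prop
  | 0, τ, σ => τ = σ
  | p + 1, τ, σ => ∃ μ, DLStepR K j τ μ ∧ DLIterR K j p μ σ

namespace Interleave

theorem filter (P : ℕ → Bool) {l a b : List ℕ} (h : Interleave l a b) :
    Interleave (l.filter P) (a.filter P) (b.filter P) := by
  induction h with
  | nil => exact .nil
  | @left x _ _ _ _ ih =>
    cases hx : P x
    · simpa [List.filter_cons, hx] using ih
    · simpa [List.filter_cons, hx] using ih.left
  | @right x _ _ _ _ ih =>
    cases hx : P x
    · simpa [List.filter_cons, hx] using ih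
    · simpa [List.filter_cons, hx] using ih.right

end Interleave

namespace DLStep

variable {K : ℕ} {τ σ : List ℕ}

theorem filter (P : ℕ → Bool) (h : DLStep K τ σ) : DLStep K (τ.filter P) (σ.filter P) := by
  obtain ⟨pre, w, post, w1, w2, rfl, hK, hw, rfl⟩ := h
  exact ⟨pre.filter P, w.filter P, post.filter P, w1.filter P, w2.filter P,
    by simp only [List.filter_append], (List.length_filter_le _ _).trans hK, hw.filter P,
    by simp only [List.filter_append]⟩

theorem toDLStepR_append {j : ℕ} (t : List ℕ) (h : DLStep K τ σ) (hτ : ∀ x ∈ τ, x ≤ j) :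
    DLStepR K j (τ ++ t) (σ ++ t) := by
  obtain ⟨pre, w, post, w1, w2, rfl, hK, hw, rfl⟩ := h
  exact ⟨pre, w, post ++ t, w1, w2, by simp only [List.append_assoc], hK,
    fun x hx => hτ x (by simp [hx]), hw, by simp only [List.append_assoc]⟩

end DLStep

namespace DLIter

variable {K : ℕ}

theorem filter (P : ℕ → Bool) : ∀ {q : ℕ} {τ σ : List ℕ},
    DLIter K q τ σ → DLIter K q (τ.filter P) (σ.filter P)
  | 0, _, _, rfl => rfl
  | _ + 1, _, _, ⟨μ, hstep, hiter⟩ => ⟨μ.filter P, hstep.filter P, hiter.filter P⟩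

theorem toDLIterR_append {j : ℕ} (t : List ℕ) : ∀ {q : ℕ} {τ σ : List ℕ},
    DLIter K q τ σ → (∀ x ∈ τ, x ≤ j) → DLIterR K j q (τ ++ t) (σ ++ t)
  | 0, _, _, rfl, _ => rfl
  | _ + 1, _, _, ⟨μ, hstep, hiter⟩, hτ =>
    ⟨μ ++ t, hstep.toDLStepR_append t hτ,
      hiter.toDLIterR_append t fun x hx => hτ x (hstep.perm.mem_iff.2 hx)⟩

end DLIter

theorem List.range'_one_eq_append {j n : ℕ} (hj : j ≤ n) :
    List.range' 1 n = List.range' 1 j ++ List.range' (j + 1) (n - j) := by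
  simpa [Nat.add_comm 1 j, Nat.add_sub_cancel' hj] using (List.range'_append (s := 1) (m := j) (n := n - j) (step := 1)).symm

theorem List.filter_le_append_range' {j : ℕ} {l : List ℕ} (hl : ∀ x ∈ l, x ≤ j) (m : ℕ) :
    (l ++ List.range' (j + 1) m).filter (fun x => decide (x ≤ j)) = l := by
  rw [List.filter_append, List.filter_eq_self.2 (by simpa using hl),
    List.filter_eq_nil_iff.2 fun x hx => by simp only [List.mem_range'_1] at hx; simp; omega,
    List.append_nil]

theorem stmt15 (n j K p : ℕ) (hj : j ≤ n) (σ' : List ℕ) (h' : IsPermList j σ')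
    (σ : List ℕ) (hσ : σ = σ' ++ List.range' (j + 1) (n - j))
    (hobt : ObtainableIn K p (List.range' 1 n) σ) :
    ∃ q ≤ p, DLIterR K j q (List.range' 1 n) σ := by
  obtain ⟨q, hq, hiter⟩ := hobt
  have hsmall : ∀ x ∈ List.range' 1 j, x ≤ j := fun x hx => by
    rw [List.mem_range'_1] at hx; omega
  have hσ'small : ∀ x ∈ σ', x ≤ j := fun x hx => hsmall x (h'.mem_iff.1 hx)
  have hproj : DLIter K q (List.range' 1 j) σ' := by
    have := hiter.filter fun x => decide (x ≤ j)
    rwa [List.range'_one_eq_append hj, hσ, List.filter_le_append_range' hsmall,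
      List.filter_le_append_range' hσ'small] at this
  rw [List.range'_one_eq_append hj, hσ]
  exact ⟨q, hq, hproj.toDLIterR_append _ hsmall⟩
end

section
/- In the worst case, at least ⌈2n(n−1)/K²⌉ duplication-loss steps of width at most K are necessary to obtain some permutation of Sₙ from the identity 1 2 ... n; specifically, any duplication-loss scenario of width at most K transforming the identity into the reversed identity n (n−1) ... 2 1 (which has n(n−1)/2 inversions) requires at least 2n(n−1)/K² steps, since each step creates at most K²/4 inversions. -/
/-!
Count inversions. A step replaces the window `w` of `pre ++ w ++ post` by `w₁ ++ w₂`, where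
`w₁, w₂` interleave to `w`. This only permutes the window, so inversions involving `pre` or
`post` are unchanged; inversions inside `w₁` or inside `w₂` were already inversions of `w`,
so the only new ones are among the `|w₁| |w₂| ≤ K² / 4` pairs across the split. The identity has no
inversions and its reversal has `n (n - 1) / 2`.
-/

section Inversions

variable {α : Type*} [LinearOrder α]

def inversionCount : List α → ℕ
  | [] => 0
  | x :: l => l.countP (· < x) + inversionCount l

def crossInversions (a b : List α) : ℕ :=
  (a.map fun x => b.countP (· < x)).sum

@[simp]
lemma crossInversions_append_left (a b c : List α) :
    crossInversions (a ++ b) c = crossInversions a c + crossInversions b c := by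
  simp [crossInversions]

lemma crossInversions_le_length_mul (a b : List α) :
    crossInversions a b ≤ a.length * b.length := by
  simpa [crossInversions] using
    List.sum_le_card_nsmul (a.map fun x => b.countP (· < x)) b.length fun _ hx ↦ by
      obtain ⟨x, -, rfl⟩ := List.mem_map.1 hx
      exact List.countP_le_length

lemma List.Perm.crossInversions_left {a a' : List α} (h : a.Perm a') (b : List α) :
    crossInversions a b = crossInversions a' b :=
  (h.map _).sum_eq

lemma List.Perm.crossInversions_right (a : List α) {b b' : List α} (h : b.Perm b') :
    crossInversions a b = crossInversions a b' := by
  simp only [crossInversions, h.countP_eq]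

lemma inversionCount_append (a b : List α) :
    inversionCount (a ++ b) = inversionCount a + inversionCount b + crossInversions a b := by
  induction a with
  | nil => simp [inversionCount, crossInversions]
  | cons x t ih =>
    simp only [List.cons_append, inversionCount, ih, crossInversions, List.map_cons,
      List.sum_cons, List.countP_append]
    omega

lemma List.Perm.inversionCount_append_append {m m' : List α} (h : m.Perm m') (a c : List α) :
    inversionCount (a ++ m' ++ c) + inversionCount m =
      inversionCount (a ++ m ++ c) + inversionCount m' := by
  simp only [inversionCount_append, crossInversions_append_left, h.crossInversions_left c,
    h.crossInversions_right a]
  omega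

lemma inversionCount_eq_zero_of_pairwise_le {l : List α} (h : l.Pairwise (· ≤ ·)) :
    inversionCount l = 0 := by
  induction l with
  | nil => rfl
  | cons x t ih =>
    rw [List.pairwise_cons] at h
    simp only [inversionCount, ih h.2, add_zero, List.countP_eq_zero, decide_eq_true_eq, not_lt]
    exact h.1

lemma inversionCount_eq_choose_two_of_pairwise_gt {l : List α} (h : l.Pairwise (· > ·)) :
    inversionCount l = l.length.choose 2 := by
  induction l with
  | nil => rfl
  | cons x t ih =>
    rw [List.pairwise_cons] at h
    have hall : t.countP (· < x) = t.length := by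
      rw [List.countP_eq_length]
      simpa using h.1
    rw [inversionCount, hall, ih h.2, List.length_cons, Nat.choose_succ_succ', Nat.choose_one_right]

end Inversions

namespace Interleave

variable {l a b : List ℕ}

lemma perm_append (h : Interleave l a b) : (a ++ b).Perm l := by
  induction h with
  | nil => rfl
  | @left x _ _ _ _ ih => exact ih.cons x
  | @right x _ _ _ _ ih => exact List.perm_middle.trans (ih.cons x)

lemma sublist_left (h : Interleave l a b) : a.Sublist l := by
  induction h with
  | nil => rfl
  | left _ ih => exact ih.cons_cons _
  | right _ ih => exact ih.cons _

lemma sublist_right (h : Interleave l a b) : b.Sublist l := by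
  induction h with
  | nil => rfl
  | left _ ih => exact ih.cons _
  | right _ ih => exact ih.cons_cons _

lemma inversionCount_add_le (h : Interleave l a b) :
    inversionCount a + inversionCount b ≤ inversionCount l := by
  induction h with
  | nil => rfl
  | @left x _ _ _ h ih =>
    have := h.sublist_left.countP_le (p := (· < x))
    simp only [inversionCount]
    omega
  | @right x _ _ _ h ih =>
    have := h.sublist_right.countP_le (p := (· < x))
    simp only [inversionCount]
    omega

lemma inversionCount_append_le (h : Interleave l a b) :
    inversionCount (a ++ b) ≤ inversionCount l + a.length * b.length := by
  have := h.inversionCount_add_le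
  have := crossInversions_le_length_mul a b
  rw [inversionCount_append]
  omega

end Interleave

lemma DLStep.four_mul_inversionCount_le {K : ℕ} {τ σ : List ℕ} (h : DLStep K τ σ) :
    4 * inversionCount σ ≤ 4 * inversionCount τ + K ^ 2 := by
  obtain ⟨pre, w, post, w₁, w₂, rfl, hK, hw, rfl⟩ := h
  have hlen : w₁.length + w₂.length = w.length := by simpa using hw.perm_append.length_eq
  have hwindow := hw.inversionCount_append_le
  have hsplit := hw.perm_append.inversionCount_append_append pre post
  have hprod : 4 * (w₁.length * w₂.length) ≤ K ^ 2 :=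
    calc 4 * (w₁.length * w₂.length) ≤ (w₁.length + w₂.length) ^ 2 := by
          rw [← mul_assoc]; exact four_mul_le_sq_add _ _
      _ ≤ K ^ 2 := Nat.pow_le_pow_left (hlen ▸ hK) 2
  omega

lemma DLIter.four_mul_inversionCount_le {K q : ℕ} {τ σ : List ℕ} (h : DLIter K q τ σ) :
    4 * inversionCount σ ≤ 4 * inversionCount τ + q * K ^ 2 := by
  induction q generalizing τ with
  | zero => cases h; omega
  | succ p ih =>
    obtain ⟨μ, hstep, hrest⟩ := h
    have := hstep.four_mul_inversionCount_le
    have := ih hrest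
    rw [add_one_mul]
    omega

theorem stmt18 (n K q : ℕ)
    (h : DLIter K q (List.range' 1 n) ((List.range' 1 n).reverse)) :
    2 * (n * (n - 1)) ≤ q * K ^ 2 := by
  have hid : inversionCount (List.range' 1 n) = 0 :=
    inversionCount_eq_zero_of_pairwise_le ((List.pairwise_lt_range' 1).imp le_of_lt)
  have hrev : inversionCount (List.range' 1 n).reverse = n.choose 2 := by
    rw [inversionCount_eq_choose_two_of_pairwise_gt
      (List.pairwise_reverse.2 (List.pairwise_lt_range' 1)), List.length_reverse,
      List.length_range']
  have hchoose : 2 * n.choose 2 = n * (n - 1) := by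
    rw [Nat.choose_two_right, Nat.mul_div_cancel' (Nat.even_mul_pred_self n).two_dvd]
  have := h.four_mul_inversionCount_le
  omega
end
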